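/- arXiv:2003.14193 — 2 statements merged into one kernel-verified Lean document; each statement's English description precedes it below -/
import Mathlib

section
/- If f: (G, α) → (H, β) is a homomorphism of Hom-groups, then Ker f = {g ∈ G : f(g) = 1_H} is a Hom-normal subgroup of G. -/
/-- A Hom-group: a set with binary operation `op`, bijective multiplicative
twisting map `al` satisfying Hom-associativity, unit and two-sided inverses. -/
structure HomGroup (G : Type*) where
  op : G → G → G
  al : G → G
  one : G
  inv : G → G
  al_bij : Function.Bijective al
  al_op : ∀ g h, al (op g h) = op (al g) (al h)
  assoc : ∀ g h k, op (al g) (op h k) = op (op g h) (al k)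
  op_one : ∀ g, op g one = al g
  one_op : ∀ g, op one g = al g
  op_inv : ∀ g, op g (inv g) = one
  inv_op : ∀ g, op (inv g) g = one

/-- A Hom-monoid: Hom-semigroup with a (two-sided Hom-)unit. -/
structure HomMonoid (G : Type*) where
  op : G → G → G
  al : G → G
  one : G
  al_bij : Function.Bijective al
  al_op : ∀ g h, al (op g h) = op (al g) (al h)
  assoc : ∀ g h k, op (al g) (op h k) = op (op g h) (al k)
  op_one : ∀ g, op g one = al g
  one_op : ∀ g, op one g = al g

/-- A Hom-semigroup. -/
structure HomSemigroup (G : Type*) where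
  op : G → G → G
  al : G → G
  al_bij : Function.Bijective al
  al_op : ∀ g h, al (op g h) = op (al g) (al h)
  assoc : ∀ g h k, op (al g) (op h k) = op (op g h) (al k)

/-- `S` is a Hom-subgroup of the Hom-group `G0`: nonempty, closed under the
product and under `al` (with `al` restricting to a bijection of `S`), and
`(S, al|_S)` is itself a Hom-group, i.e. it has a unit and inverses. -/
structure IsHomSubgroup {G : Type*} (G0 : HomGroup G) (S : Set G) : Prop where
  nonempty : S.Nonempty
  op_mem : ∀ a ∈ S, ∀ b ∈ S, G0.op a b ∈ S
  al_mem : ∀ a ∈ S, G0.al a ∈ S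
  al_surjOn : ∀ a ∈ S, ∃ b ∈ S, G0.al b = a
  exists_unit : ∃ e ∈ S, (∀ a ∈ S, G0.op a e = G0.al a ∧ G0.op e a = G0.al a) ∧
    ∀ a ∈ S, ∃ b ∈ S, G0.op a b = e ∧ G0.op b a = e

/-- The left Hom-coset `aS`. -/
def leftCoset {G : Type*} (G0 : HomGroup G) (a : G) (S : Set G) : Set G :=
  {x | ∃ h ∈ S, x = G0.op a h}

/-- The right Hom-coset `Sa`. -/
def rightCoset {G : Type*} (G0 : HomGroup G) (a : G) (S : Set G) : Set G :=
  {x | ∃ h ∈ S, x = G0.op h a}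


lemma HomGroup.leftCancel {G : Type*} (G0 : HomGroup G) {a x y : G}
    (h : G0.op a x = G0.op a y) : x = y := by
  have hx := G0.assoc (G0.inv a) a x
  have hy := G0.assoc (G0.inv a) a y
  rw [G0.inv_op, G0.one_op] at hx hy
  have : G0.al (G0.al x) = G0.al (G0.al y) := by rw [← hx, ← hy, h]
  exact G0.al_bij.1 (G0.al_bij.1 this)

lemma HomGroup.rightCancel {G : Type*} (G0 : HomGroup G) {a x y : G}
    (h : G0.op x a = G0.op y a) : x = y := by
  have hx := G0.assoc x a (G0.inv a)
  have hy := G0.assoc y a (G0.inv a)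
  rw [G0.op_inv, G0.op_one] at hx hy
  have : G0.al (G0.al x) = G0.al (G0.al y) := by rw [hx, hy, h]
  exact G0.al_bij.1 (G0.al_bij.1 this)

lemma HomGroup.al_one {G : Type*} (G0 : HomGroup G) : G0.al G0.one = G0.one := by
  have h1 := G0.al_op G0.one G0.one
  rw [G0.op_one] at h1
  have h2 := G0.op_one (G0.al G0.one)
  exact G0.leftCancel (h1.symm.trans h2.symm)

lemma HomGroup.inv_one {G : Type*} (G0 : HomGroup G) : G0.inv G0.one = G0.one := by
  have h1 := G0.one_op (G0.inv G0.one)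
  rw [G0.op_inv] at h1
  exact G0.al_bij.1 (h1.symm.trans G0.al_one.symm)

lemma HomGroup.op_surj_left {G : Type*} (G0 : HomGroup G) (g x : G) :
    ∃ h, G0.op g h = x := by
  obtain ⟨h1, hh1⟩ := G0.al_bij.2 (G0.op (G0.al (G0.inv g)) x)
  obtain ⟨h, hh⟩ := G0.al_bij.2 h1
  refine ⟨h, G0.leftCancel (a := G0.al (G0.inv g)) ?_⟩
  have key := G0.assoc (G0.inv g) g h
  rw [G0.inv_op, G0.one_op] at key
  rw [key, hh, hh1]

lemma HomGroup.op_surj_right {G : Type*} (G0 : HomGroup G) (g x : G) :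
    ∃ h, G0.op h g = x := by
  obtain ⟨h1, hh1⟩ := G0.al_bij.2 (G0.op x (G0.al (G0.inv g)))
  obtain ⟨h, hh⟩ := G0.al_bij.2 h1
  refine ⟨h, G0.rightCancel (a := G0.al (G0.inv g)) ?_⟩
  have key := G0.assoc h g (G0.inv g)
  rw [G0.op_inv, G0.op_one] at key
  rw [← key, hh, hh1]

/-- The kernel of a homomorphism of Hom-groups is a Hom-normal subgroup. -/
theorem ker_homNormal {G H : Type*} (G0 : HomGroup G) (H0 : HomGroup H)
    (f : G → H) (hf : ∀ g k : G, f (G0.op g k) = H0.op (f g) (f k))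
    (hfa : ∀ g : G, H0.al (f g) = f (G0.al g)) :
    IsHomSubgroup G0 {g : G | f g = H0.one} ∧
      ∀ g : G, leftCoset G0 g {g : G | f g = H0.one} =
        rightCoset G0 g {g : G | f g = H0.one} := by
  -- f maps the unit to the unit
  have fone : f G0.one = H0.one := by
    have h1 := hf G0.one G0.one
    rw [G0.op_one, G0.al_one] at h1
    have h2 := H0.op_one (f G0.one)
    rw [hfa, G0.al_one] at h2
    exact H0.leftCancel (h1.symm.trans h2.symm)
  -- f maps inverses to inverses
  have finv : ∀ g : G, f (G0.inv g) = H0.inv (f g) := by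
    intro g
    have h1 := hf g (G0.inv g)
    rw [G0.op_inv, fone] at h1
    have h2 := H0.op_inv (f g)
    exact H0.leftCancel (h1.symm.trans h2.symm)
  -- membership in cosets characterized via f
  have memL : ∀ g x : G, x ∈ leftCoset G0 g {g : G | f g = H0.one} ↔
      f x = H0.al (f g) := by
    intro g x
    constructor
    · rintro ⟨h, hh, rfl⟩
      rw [hf, hh, H0.op_one]
    · intro hx
      obtain ⟨h, hh⟩ := G0.op_surj_left g x
      refine ⟨h, ?_, hh.symm⟩
      have h1 : H0.op (f g) (f h) = H0.op (f g) H0.one := by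
        rw [← hf, hh, hx, H0.op_one]
      exact H0.leftCancel h1
  have memR : ∀ g x : G, x ∈ rightCoset G0 g {g : G | f g = H0.one} ↔
      f x = H0.al (f g) := by
    intro g x
    constructor
    · rintro ⟨h, hh, rfl⟩
      rw [hf, hh, H0.one_op]
    · intro hx
      obtain ⟨h, hh⟩ := G0.op_surj_right g x
      refine ⟨h, ?_, hh.symm⟩
      have h1 : H0.op (f h) (f g) = H0.op H0.one (f g) := by
        rw [← hf, hh, hx, H0.one_op]
      exact H0.rightCancel h1
  constructor
  · constructor
    · exact ⟨G0.one, fone⟩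
    · intro a ha b hb
      show f (G0.op a b) = H0.one
      rw [hf, ha, hb, H0.op_one, H0.al_one]
    · intro a ha
      show f (G0.al a) = H0.one
      rw [← hfa, ha, H0.al_one]
    · intro a ha
      obtain ⟨b, hb⟩ := G0.al_bij.2 a
      refine ⟨b, ?_, hb⟩
      have : H0.al (f b) = H0.al H0.one := by
        rw [hfa, hb, ha, H0.al_one]
      exact H0.al_bij.1 this
    · refine ⟨G0.one, fone, fun a _ => ⟨G0.op_one a, G0.one_op a⟩, fun a ha => ?_⟩
      refine ⟨G0.inv a, ?_, G0.op_inv a, G0.inv_op a⟩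
      show f (G0.inv a) = H0.one
      rw [finv, ha, H0.inv_one]
  · intro g
    ext x
    rw [memL, memR]
end

section
/- If H is a Hom-subgroup and N a Hom-normal subgroup of a Hom-group G, then NH = HN and NH is a Hom-subgroup of G. -/
section Aux
variable {G : Type*} (G0 : HomGroup G)

lemma HomGroup.cancel_left {a b c : G} (h : G0.op a b = G0.op a c) : b = c := by
  have h2 : G0.op (G0.al (G0.inv a)) (G0.op a b)
      = G0.op (G0.al (G0.inv a)) (G0.op a c) := by rw [h]
  rw [G0.assoc, G0.assoc, G0.inv_op, G0.one_op, G0.one_op] at h2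
  exact G0.al_bij.injective (G0.al_bij.injective h2)

lemma HomGroup.cancel_right {a b c : G} (h : G0.op b a = G0.op c a) : b = c := by
  have h2 : G0.op (G0.op b a) (G0.al (G0.inv a))
      = G0.op (G0.op c a) (G0.al (G0.inv a)) := by rw [h]
  rw [← G0.assoc, ← G0.assoc, G0.op_inv, G0.op_one, G0.op_one] at h2
  exact G0.al_bij.injective (G0.al_bij.injective h2)

lemma HomGroup.al_one_s17 : G0.al G0.one = G0.one := by
  apply G0.cancel_right (a := G0.al G0.one)
  rw [← G0.al_op, G0.one_op, G0.one_op]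

lemma HomGroup.al_inv (a : G) : G0.al (G0.inv a) = G0.inv (G0.al a) := by
  apply G0.cancel_left (a := G0.al a)
  rw [← G0.al_op, G0.op_inv, G0.op_inv, G0.al_one_s17]

lemma HomGroup.inv_inv (a : G) : G0.inv (G0.inv a) = a := by
  apply G0.cancel_left (a := G0.inv a)
  rw [G0.op_inv, G0.inv_op]

lemma HomGroup.mul_inv_rev (a b : G) :
    G0.op (G0.op a b) (G0.op (G0.inv b) (G0.inv a)) = G0.one := by
  obtain ⟨d, hd⟩ := G0.al_bij.surjective a
  obtain ⟨c, hc⟩ := G0.al_bij.surjective b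
  subst hd hc
  rw [← G0.al_inv, ← G0.al_inv, ← G0.al_op (G0.inv c) (G0.inv d),
    ← G0.assoc (G0.al d) (G0.al c) (G0.op (G0.inv c) (G0.inv d))]
  have hinner : G0.op (G0.al c) (G0.op (G0.inv c) (G0.inv d))
      = G0.al (G0.inv (G0.al d)) := by
    rw [G0.assoc, G0.op_inv, G0.one_op, G0.al_inv]
  rw [hinner, ← G0.al_op, G0.op_inv, G0.al_one_s17]

lemma HomGroup.inv_mul_rev (a b : G) :
    G0.op (G0.op (G0.inv b) (G0.inv a)) (G0.op a b) = G0.one := by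
  have := G0.mul_inv_rev (G0.inv b) (G0.inv a)
  rwa [G0.inv_inv, G0.inv_inv] at this

lemma IsHomSubgroup.one_mem {S : Set G} (hS : IsHomSubgroup G0 S) : G0.one ∈ S := by
  obtain ⟨e, he, hunit, -⟩ := hS.exists_unit
  have h1 : G0.op e e = G0.op e G0.one := by
    rw [(hunit e he).1, G0.op_one]
  have : e = G0.one := G0.cancel_left h1
  rwa [this] at he

lemma IsHomSubgroup.inv_mem {S : Set G} (hS : IsHomSubgroup G0 S)
    {a : G} (ha : a ∈ S) : G0.inv a ∈ S := by
  obtain ⟨e, he, hunit, hinvs⟩ := hS.exists_unit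
  have heone : e = G0.one := by
    apply G0.cancel_left (a := e)
    rw [(hunit e he).1, G0.op_one]
  obtain ⟨b, hb, hab, -⟩ := hinvs a ha
  have : b = G0.inv a := by
    apply G0.cancel_left (a := a)
    rw [hab, heone, G0.op_inv]
  rwa [this] at hb

end Aux

/-- If `H` is a Hom-subgroup and `N` a Hom-normal subgroup of `G`, then
`NH = HN` and `NH` is a Hom-subgroup of `G`. -/
theorem homSubgroup_mul {G : Type*} (G0 : HomGroup G) (H N : Set G)
    (hH : IsHomSubgroup G0 H) (hN : IsHomSubgroup G0 N)
    (hnorm : ∀ g : G, leftCoset G0 g N = rightCoset G0 g N) :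
    Set.image2 G0.op N H = Set.image2 G0.op H N ∧
      IsHomSubgroup G0 (Set.image2 G0.op N H) := by
  -- swap lemmas from normality
  have nh_swap : ∀ n ∈ N, ∀ h : G, ∃ n' ∈ N, G0.op n h = G0.op h n' := by
    intro n hn h
    have : G0.op n h ∈ rightCoset G0 h N := ⟨n, hn, rfl⟩
    rw [← hnorm h] at this
    obtain ⟨n', hn', heq⟩ := this
    exact ⟨n', hn', heq⟩
  have hn_swap : ∀ h : G, ∀ n ∈ N, ∃ n' ∈ N, G0.op h n = G0.op n' h := by
    intro h n hn
    have : G0.op h n ∈ leftCoset G0 h N := ⟨n, hn, rfl⟩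
    rw [hnorm h] at this
    obtain ⟨n', hn', heq⟩ := this
    exact ⟨n', hn', heq⟩
  have heq : Set.image2 G0.op N H = Set.image2 G0.op H N := by
    ext x
    simp only [Set.mem_image2]
    constructor
    · rintro ⟨n, hn, h, hh, rfl⟩
      obtain ⟨n', hn', heq⟩ := nh_swap n hn h
      exact ⟨h, hh, n', hn', heq.symm⟩
    · rintro ⟨h, hh, n, hn, rfl⟩
      obtain ⟨n', hn', heq⟩ := hn_swap h n hn
      exact ⟨n', hn', h, hh, heq.symm⟩
  refine ⟨heq, ?_⟩
  have h1N : G0.one ∈ N := hN.one_mem G0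
  have h1H : G0.one ∈ H := hH.one_mem G0
  have h1NH : G0.one ∈ Set.image2 G0.op N H :=
    ⟨G0.one, h1N, G0.one, h1H, by rw [G0.op_one, G0.al_one_s17]⟩
  constructor
  · exact ⟨G0.one, h1NH⟩
  · -- closure under product
    rintro x ⟨n1, hn1, h1, hh1, rfl⟩ y ⟨n2, hn2, h2, hh2, rfl⟩
    obtain ⟨m, hm, hmeq⟩ := hN.al_surjOn n2 hn2
    obtain ⟨k, hk, hkeq⟩ := hH.al_surjOn h2 hh2
    obtain ⟨h, hh, hheq⟩ := hH.al_surjOn h1 hh1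
    have step1 : G0.op n2 h2 = G0.al (G0.op m k) := by
      rw [G0.al_op, hmeq, hkeq]
    have step2 : G0.op (G0.op n1 h1) (G0.op n2 h2)
        = G0.op (G0.al n1) (G0.op h1 (G0.op m k)) := by
      rw [step1, G0.assoc]
    have step3 : G0.op h1 (G0.op m k) = G0.op (G0.op h m) (G0.al k) := by
      rw [← hheq, G0.assoc]
    obtain ⟨n', hn', hn'eq⟩ := hn_swap h m hm
    have step4 : G0.op (G0.op h m) (G0.al k) = G0.op (G0.al n') (G0.op h k) :=
      by rw [hn'eq, ← G0.assoc]
    obtain ⟨t, ht, hteq⟩ := hH.al_surjOn (G0.op h k)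
      (hH.op_mem h hh k hk)
    obtain ⟨p, hp, hpeq⟩ := hN.al_surjOn n1 hn1
    have step5 : G0.op (G0.op n1 h1) (G0.op n2 h2)
        = G0.al (G0.op n1 (G0.op n' t)) := by
      rw [step2, step3, step4, ← hteq, ← G0.al_op, ← G0.al_op]
    have hmem : G0.op n1 (G0.op n' t) ∈ Set.image2 G0.op N H := by
      rw [← hpeq, G0.assoc]
      exact ⟨G0.op p n', hN.op_mem p hp n' hn', G0.al t, hH.al_mem t ht, rfl⟩
    obtain ⟨q, hq, r, hr, hqr⟩ := hmem
    rw [step5, ← hqr, G0.al_op]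
    exact ⟨G0.al q, hN.al_mem q hq, G0.al r, hH.al_mem r hr, rfl⟩
  · -- closed under al
    rintro x ⟨n, hn, h, hh, rfl⟩
    rw [G0.al_op]
    exact ⟨G0.al n, hN.al_mem n hn, G0.al h, hH.al_mem h hh, rfl⟩
  · -- al surjective on NH
    rintro x ⟨n, hn, h, hh, rfl⟩
    obtain ⟨n', hn', hn'eq⟩ := hN.al_surjOn n hn
    obtain ⟨h', hh', hh'eq⟩ := hH.al_surjOn h hh
    exact ⟨G0.op n' h', ⟨n', hn', h', hh', rfl⟩, by rw [G0.al_op, hn'eq, hh'eq]⟩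
  · -- unit and inverses
    refine ⟨G0.one, h1NH, fun a _ => ⟨G0.op_one a, G0.one_op a⟩, ?_⟩
    rintro x ⟨n, hn, h, hh, rfl⟩
    refine ⟨G0.op (G0.inv h) (G0.inv n), ?_, G0.mul_inv_rev n h, G0.inv_mul_rev n h⟩
    rw [heq]
    exact ⟨G0.inv h, hH.inv_mem G0 hh, G0.inv n, hN.inv_mem G0 hn, rfl⟩
end
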